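/- Let n ≥ 4, p, q ≥ 2, u = e_1 + e_n, v = e_2 + e_{n-1}. For Z = (z_1,...,z_n) with z_k = a_k + ib_k, the matrix s_{Z,z} preserves both lines <u> and <v> if and only if a_1 + a_n = 0, b_1 + b_n = 0, a_2 + a_{n-1} = 0, b_2 + b_{n-1} = 0 (with the other a_k, b_k for 3 ≤ k ≤ n-2 and z arbitrary). -/

import Mathlib

open Complex Matrix ComplexConjugate

noncomputable section

/-- signature entries of the diagonal matrix `I = diag(1^p, (-1)^q)`. -/
def sgnCR (p k : ℕ) : ℂ := if k < p then 1 else -1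

/-- safe indexing of a vector `Z : Fin n → ℂ` by a natural number. -/
def vx {n : ℕ} (Z : Fin n → ℂ) (k : ℕ) : ℂ := if h : k < n then Z ⟨k, h⟩ else 0

/-- the pseudo-Hermitian form `m` of signature `(p+1, q+1)` on `ℂ^{n+2}`. -/
def mForm (n p : ℕ) (u v : Fin (n + 2) → ℂ) : ℂ :=
  u ⟨0, by omega⟩ * conj (v ⟨n + 1, by omega⟩) + u ⟨n + 1, by omega⟩ * conj (v ⟨0, by omega⟩)
    + ∑ k : Fin n, sgnCR p k.val * (u ⟨k.val + 1, by omega⟩ * conj (v ⟨k.val + 1, by omega⟩))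

/-- the matrix `s_{Z,z}` with rows `(-1, -Z, iz + ½ Z I Z^*)`, `(0, E, -I Z^*)`, `(0, 0, -1)`. -/
def sMat (n p : ℕ) (Z : Fin n → ℂ) (z : ℝ) : Matrix (Fin (n + 2)) (Fin (n + 2)) ℂ :=
  Matrix.of fun i j =>
    if i.val = 0 then
      if j.val = 0 then -1
      else if j.val = n + 1 then
        Complex.I * z + (1 / 2) * ∑ k : Fin n, Z k * sgnCR p k.val * conj (Z k)
      else -vx Z (j.val - 1)
    else if i.val = n + 1 then
      if j.val = n + 1 then -1 else 0
    else
      if j.val = 0 then 0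
      else if j.val = n + 1 then -(sgnCR p (i.val - 1) * conj (vx Z (i.val - 1)))
      else if i = j then 1 else 0
/-!
For `1 ≤ j ≤ n` the `j`-th column of `s_{Z,z}` is `e_j - z_j e_0`, so `s_{Z,z}` sends
`e_a + e_b` to `(e_a + e_b) - (z_a + z_b) e_0`. Since `e_a + e_b` has no `e_0` component, this is
a multiple of `e_a + e_b` exactly when `z_a + z_b = 0`.
-/

lemma sMat_col_of_ne {n p : ℕ} (Z : Fin n → ℂ) (z : ℝ) {j : Fin (n + 2)} (hj₀ : j.val ≠ 0)
    (hjn : j.val ≠ n + 1) :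
    (sMat n p Z z).col j = Pi.single j 1 - Pi.single 0 (vx Z (j.val - 1)) := by
  have hj : j ≠ 0 := fun h => hj₀ (by simp [h])
  ext i
  by_cases hi₀ : i.val = 0
  · obtain rfl : i = 0 := Fin.ext hi₀
    simp [sMat, hjn, hj, Ne.symm hj]
  · have hi : i ≠ 0 := fun h => hi₀ (by simp [h])
    by_cases hij : i = j
    · subst hij
      simp [sMat, hjn, hi]
    · by_cases hin : i.val = n + 1 <;> simp [sMat, hin, hjn, hi, hij]

lemma exists_sub_single_eq_smul_iff {ι R : Type*} [DecidableEq ι] [Ring R] (x : ι → R) {i₀ : ι}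
    (hx : x i₀ = 0) (w : R) : (∃ c : R, x - Pi.single i₀ w = c • x) ↔ w = 0 := by
  constructor
  · rintro ⟨c, hc⟩
    simpa [hx] using congrFun hc i₀
  · rintro rfl
    exact ⟨1, by simp⟩

lemma indicator_eq_single_add_single {N : ℕ} {a b : Fin N} (hab : a ≠ b) :
    (fun j : Fin N => if j.val = a.val ∨ j.val = b.val then (1 : ℂ) else 0)
      = Pi.single a 1 + Pi.single b 1 := by
  ext j
  by_cases ha : j = a
  · simp [ha, hab]
  · by_cases hb : j = b <;> simp [Fin.val_inj, ha, hb, Ne.symm hab]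

lemma sMat_preserves_line_iff {n p : ℕ} (Z : Fin n → ℂ) (z : ℝ) {a b : ℕ}
    (ha : 1 ≤ a) (ha' : a ≤ n) (hb : 1 ≤ b) (hb' : b ≤ n) (hab : a ≠ b) :
    (∃ c : ℂ, sMat n p Z z *ᵥ (fun j : Fin (n + 2) => if j.val = a ∨ j.val = b then 1 else 0)
      = c • (fun j : Fin (n + 2) => if j.val = a ∨ j.val = b then 1 else 0)) ↔
    vx Z (a - 1) + vx Z (b - 1) = 0 := by
  have key := indicator_eq_single_add_single (a := (⟨a, by omega⟩ : Fin (n + 2)))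
    (b := ⟨b, by omega⟩) (by simpa using hab)
  simp only at key
  rw [key, mulVec_add, mulVec_single_one, mulVec_single_one,
    sMat_col_of_ne Z z (by simp; omega) (by simp; omega),
    sMat_col_of_ne Z z (by simp; omega) (by simp; omega), sub_add_sub_comm, ← Pi.single_add]
  refine exists_sub_single_eq_smul_iff _ ?_ _
  rw [Pi.add_apply, Pi.single_eq_of_ne (by simp [Fin.ext_iff]; omega),
    Pi.single_eq_of_ne (by simp [Fin.ext_iff]; omega), add_zero]

theorem example_case4_general (n p : ℕ) (hn : 4 ≤ n)
    (Z : Fin n → ℂ) (z : ℝ) :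
    let u : Fin (n + 2) → ℂ := fun j => if j.val = 1 ∨ j.val = n then 1 else 0
    let v : Fin (n + 2) → ℂ := fun j => if j.val = 2 ∨ j.val = n - 1 then 1 else 0
    ((∃ c : ℂ, (sMat n p Z z).mulVec u = c • u) ∧
     (∃ d : ℂ, (sMat n p Z z).mulVec v = d • v)) ↔
    ((vx Z 0).re + (vx Z (n - 1)).re = 0 ∧ (vx Z 0).im + (vx Z (n - 1)).im = 0 ∧
     (vx Z 1).re + (vx Z (n - 2)).re = 0 ∧ (vx Z 1).im + (vx Z (n - 2)).im = 0) := by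
  intro u v
  rw [sMat_preserves_line_iff Z z le_rfl (by omega) (by omega) le_rfl (by omega),
    sMat_preserves_line_iff Z z (by omega) (by omega) (by omega) (by omega) (by omega),
    show n - 1 - 1 = n - 2 by omega]
  simp only [Complex.ext_iff, add_re, add_im, zero_re, zero_im, Nat.sub_self, Nat.add_one_sub_one,
    and_assoc]

/-- for `n ≥ 4`, `p, q ≥ 2`, `u = e₁ + e_n`, `v = e₂ + e_{n-1}`, the matrix
`s_{Z,z}` preserves both lines `⟨u⟩` and `⟨v⟩` if and only if `a₁ + a_n = 0`,
`b₁ + b_n = 0`, `a₂ + a_{n-1} = 0`, `b₂ + b_{n-1} = 0` (writing `z_k = a_k + i b_k` for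
the entries of `Z`, with the other entries and `z` arbitrary). -/
theorem example_case4 (n p : ℕ) (hn : 4 ≤ n) (hp : 2 ≤ p) (hq : p + 2 ≤ n)
    (Z : Fin n → ℂ) (z : ℝ) :
    let u : Fin (n + 2) → ℂ := fun j => if j.val = 1 ∨ j.val = n then 1 else 0
    let v : Fin (n + 2) → ℂ := fun j => if j.val = 2 ∨ j.val = n - 1 then 1 else 0
    ((∃ c : ℂ, (sMat n p Z z).mulVec u = c • u) ∧
     (∃ d : ℂ, (sMat n p Z z).mulVec v = d • v)) ↔
    ((vx Z 0).re + (vx Z (n - 1)).re = 0 ∧ (vx Z 0).im + (vx Z (n - 1)).im = 0 ∧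
     (vx Z 1).re + (vx Z (n - 2)).re = 0 ∧ (vx Z 1).im + (vx Z (n - 2)).im = 0) :=
  example_case4_general n p hn Z z
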